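/- arXiv:1908.02905 — 2 statements merged into one kernel-verified Lean document; each statement's English description precedes it below -/
import Mathlib

section
/- Let Σ be a polynomial control system on ℝ^n. Then: (i) there exists an integer l̂ such that C_0^{#l̂} = C_0^{#l̂+1}; (ii) for any k with C_0^{#k} = C_0^{#k+1}, one has C_0^{#m} = C_0^{#k} for all m ≥ k, and S_k^* = S_∞^*. -/
open MvPolynomial

/-- Evaluation of a polynomial vector field at a point of `ℝ^n`. -/
noncomputable def pvfEval {n : ℕ} (X : Fin n → MvPolynomial (Fin n) ℝ) (a : Fin n → ℝ) :
    Fin n → ℝ := fun i => eval a (X i)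

/-- Lie bracket of polynomial vector fields:
`[X,Y]_j = ∑ i, (X i * ∂Y_j/∂x_i − Y i * ∂X_j/∂x_i)`. -/
noncomputable def pBracket {n : ℕ} (X Y : Fin n → MvPolynomial (Fin n) ℝ) :
    Fin n → MvPolynomial (Fin n) ℝ :=
  fun j => ∑ i, (X i * pderiv i (Y j) - Y i * pderiv i (X j))

/-- Lie derivative of a polynomial along a polynomial vector field:
`L_X p = ∑ i, X i * ∂p/∂x_i`. -/
noncomputable def pLieDeriv {n : ℕ} (X : Fin n → MvPolynomial (Fin n) ℝ)
    (p : MvPolynomial (Fin n) ℝ) : MvPolynomial (Fin n) ℝ :=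
  ∑ i, X i * pderiv i p

/-- An ideal `I` is invariant under `L_X` if `L_X p ∈ I` for every `p ∈ I`. -/
def IdealInvariant {n : ℕ} (X : Fin n → MvPolynomial (Fin n) ℝ)
    (I : Ideal (MvPolynomial (Fin n) ℝ)) : Prop :=
  ∀ p ∈ I, pLieDeriv X p ∈ I

/-- The algebraic set `𝕍(J)` of an ideal `J`. -/
def zeroSet {n : ℕ} (J : Ideal (MvPolynomial (Fin n) ℝ)) : Set (Fin n → ℝ) :=
  {a | ∀ p ∈ J, eval a p = 0}

/-- The vanishing ideal `𝕀(A)` of a set `A ⊆ ℝ^n`. -/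
noncomputable def zeroIdeal {n : ℕ} (A : Set (Fin n → ℝ)) :
    Ideal (MvPolynomial (Fin n) ℝ) where
  carrier := {p | ∀ a ∈ A, eval a p = 0}
  add_mem' := fun hp hq a ha => by simp [hp a ha, hq a ha]
  zero_mem' := fun a ha => by simp
  smul_mem' := fun c p hp a ha => by simp [smul_eq_mul, hp a ha]

/-- The family `𝒞^k` of Lie brackets of depth at most `k` of the system vector fields
`f, g_1, …, g_m`: `𝒞^0 = {f, g_1, …, g_m}` and
`𝒞^{k+1} = 𝒞^k ∪ {[X,h] : X ∈ {f, g_1, …, g_m}, h ∈ 𝒞^k}`. -/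
def accFam {n m : ℕ} (f : Fin n → MvPolynomial (Fin n) ℝ)
    (g : Fin m → Fin n → MvPolynomial (Fin n) ℝ) :
    ℕ → Set (Fin n → MvPolynomial (Fin n) ℝ)
  | 0 => insert f (Set.range g)
  | k + 1 => accFam f g k ∪
      {h | ∃ X ∈ insert f (Set.range g), ∃ h' ∈ accFam f g k, h = pBracket X h'}

/-- `C^k(a) = span_ℝ {h(a) : h ∈ 𝒞^k}`. -/
noncomputable def accSpan {n m : ℕ} (f : Fin n → MvPolynomial (Fin n) ℝ)
    (g : Fin m → Fin n → MvPolynomial (Fin n) ℝ) (k : ℕ) (a : Fin n → ℝ) :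
    Submodule ℝ (Fin n → ℝ) :=
  Submodule.span ℝ ((fun h => pvfEval h a) '' accFam f g k)

/-- `C(a) = span_ℝ {h(a) : h ∈ 𝒞}`, where `𝒞 = ⋃ k, 𝒞^k`. -/
noncomputable def accSpanInf {n m : ℕ} (f : Fin n → MvPolynomial (Fin n) ℝ)
    (g : Fin m → Fin n → MvPolynomial (Fin n) ℝ) (a : Fin n → ℝ) :
    Submodule ℝ (Fin n → ℝ) :=
  Submodule.span ℝ ((fun h => pvfEval h a) '' ⋃ k, accFam f g k)

/-- `S_k^{<l} = {a : dim C^k(a) < l}`. -/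
def singularSetLt {n m : ℕ} (f : Fin n → MvPolynomial (Fin n) ℝ)
    (g : Fin m → Fin n → MvPolynomial (Fin n) ℝ) (k l : ℕ) : Set (Fin n → ℝ) :=
  {a | Module.finrank ℝ (accSpan f g k a) < l}

/-- `S_∞^{<l} = {a : dim C(a) < l}`;  `S_∞ = S_∞^{<n}`. -/
def singularSetInfLt {n m : ℕ} (f : Fin n → MvPolynomial (Fin n) ℝ)
    (g : Fin m → Fin n → MvPolynomial (Fin n) ℝ) (l : ℕ) : Set (Fin n → ℝ) :=
  {a | Module.finrank ℝ (accSpanInf f g a) < l}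

/-- The family `𝒞_0^k`: `𝒞_0^0 = {g_1, …, g_m}` and
`𝒞_0^{k+1} = 𝒞_0^k ∪ {[X,h] : X ∈ {f, g_1, …, g_m}, h ∈ 𝒞_0^k}`. -/
def strongAccFam {n m : ℕ} (f : Fin n → MvPolynomial (Fin n) ℝ)
    (g : Fin m → Fin n → MvPolynomial (Fin n) ℝ) :
    ℕ → Set (Fin n → MvPolynomial (Fin n) ℝ)
  | 0 => Set.range g
  | k + 1 => strongAccFam f g k ∪
      {h | ∃ X ∈ insert f (Set.range g), ∃ h' ∈ strongAccFam f g k, h = pBracket X h'}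

/-- `C_0^k(a) = span_ℝ {h(a) : h ∈ 𝒞_0^k}`. -/
noncomputable def strongAccSpan {n m : ℕ} (f : Fin n → MvPolynomial (Fin n) ℝ)
    (g : Fin m → Fin n → MvPolynomial (Fin n) ℝ) (k : ℕ) (a : Fin n → ℝ) :
    Submodule ℝ (Fin n → ℝ) :=
  Submodule.span ℝ ((fun h => pvfEval h a) '' strongAccFam f g k)

/-- `C_0(a) = span_ℝ {h(a) : h ∈ 𝒞_0}`. -/
noncomputable def strongAccSpanInf {n m : ℕ} (f : Fin n → MvPolynomial (Fin n) ℝ)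
    (g : Fin m → Fin n → MvPolynomial (Fin n) ℝ) (a : Fin n → ℝ) :
    Submodule ℝ (Fin n → ℝ) :=
  Submodule.span ℝ ((fun h => pvfEval h a) '' ⋃ k, strongAccFam f g k)

/-- `S_k^{*<l} = {a : dim C_0^k(a) < l}`. -/
def strongSingularSetLt {n m : ℕ} (f : Fin n → MvPolynomial (Fin n) ℝ)
    (g : Fin m → Fin n → MvPolynomial (Fin n) ℝ) (k l : ℕ) : Set (Fin n → ℝ) :=
  {a | Module.finrank ℝ (strongAccSpan f g k a) < l}

/-- `S_∞^{*<l} = {a : dim C_0(a) < l}`;  `S_∞^* = S_∞^{*<n}`. -/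
def strongSingularSetInfLt {n m : ℕ} (f : Fin n → MvPolynomial (Fin n) ℝ)
    (g : Fin m → Fin n → MvPolynomial (Fin n) ℝ) (l : ℕ) : Set (Fin n → ℝ) :=
  {a | Module.finrank ℝ (strongAccSpanInf f g a) < l}

/-- The submodule `C_0^{#k}` of the `ℝ[x]`-module `ℝ[x]^n` generated by `𝒞_0^k`. -/
noncomputable def strongAccModule {n m : ℕ} (f : Fin n → MvPolynomial (Fin n) ℝ)
    (g : Fin m → Fin n → MvPolynomial (Fin n) ℝ) (k : ℕ) :
    Submodule (MvPolynomial (Fin n) ℝ) (Fin n → MvPolynomial (Fin n) ℝ) :=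
  Submodule.span (MvPolynomial (Fin n) ℝ) (strongAccFam f g k)

section AuxLemmas

variable {n m : ℕ} (f : Fin n → MvPolynomial (Fin n) ℝ)
  (g : Fin m → Fin n → MvPolynomial (Fin n) ℝ)

lemma strongAccFam_mono : Monotone (strongAccFam f g) := by
  apply monotone_nat_of_le_succ
  intro k h hh
  exact Or.inl hh

lemma strongAccModule_mono : Monotone (strongAccModule f g) :=
  fun i j hij => Submodule.span_mono (strongAccFam_mono f g hij)

lemma pBracket_add (X Y Z : Fin n → MvPolynomial (Fin n) ℝ) :
    pBracket X (Y + Z) = pBracket X Y + pBracket X Z := by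
  funext j
  simp only [pBracket, Pi.add_apply, map_add]
  rw [← Finset.sum_add_distrib]
  congr 1
  funext i
  ring

lemma pBracket_smul (X Y : Fin n → MvPolynomial (Fin n) ℝ) (p : MvPolynomial (Fin n) ℝ) :
    pBracket X (p • Y) = pLieDeriv X p • Y + p • pBracket X Y := by
  funext j
  simp only [pBracket, pLieDeriv, Pi.add_apply, Pi.smul_apply, smul_eq_mul,
    Finset.sum_mul, Finset.mul_sum]
  rw [← Finset.sum_add_distrib]
  congr 1
  funext i
  have : pderiv i (p * Y j) = p * pderiv i (Y j) + Y j * pderiv i p := by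
    rw [pderiv_mul]; ring
  rw [this]
  ring

lemma bracket_mem_succ (X : Fin n → MvPolynomial (Fin n) ℝ)
    (hX : X ∈ insert f (Set.range g)) (k : ℕ)
    (h : Fin n → MvPolynomial (Fin n) ℝ) (hh : h ∈ strongAccModule f g k) :
    pBracket X h ∈ strongAccModule f g (k + 1) := by
  induction hh using Submodule.span_induction with
  | mem y hy =>
      exact Submodule.subset_span (Or.inr ⟨X, hX, y, hy, rfl⟩)
  | zero =>
      have : pBracket X (0 : Fin n → MvPolynomial (Fin n) ℝ) = 0 := by
        funext j; simp [pBracket]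
      rw [this]; exact Submodule.zero_mem _
  | add y z _ _ hy hz =>
      rw [pBracket_add]; exact Submodule.add_mem _ hy hz
  | smul p y hy hpy =>
      rw [pBracket_smul]
      exact Submodule.add_mem _
        (Submodule.smul_mem _ _ (strongAccModule_mono f g (Nat.le_succ k) hy))
        (Submodule.smul_mem _ _ hpy)

/-- Evaluation at `a` as an `ℝ`-linear map. -/
noncomputable def pvfEvalLM (a : Fin n → ℝ) :
    (Fin n → MvPolynomial (Fin n) ℝ) →ₗ[ℝ] (Fin n → ℝ) where
  toFun X := pvfEval X a
  map_add' X Y := by funext i; simp [pvfEval]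
  map_smul' c X := by funext i; simp [pvfEval, MvPolynomial.smul_eval]

lemma pvfEvalLM_poly_smul (a : Fin n → ℝ) (p : MvPolynomial (Fin n) ℝ)
    (y : Fin n → MvPolynomial (Fin n) ℝ) :
    pvfEvalLM a (p • y) = eval a p • pvfEvalLM a y := by
  funext i; simp [pvfEvalLM, pvfEval]

lemma strongAccSpan_eq_map (k : ℕ) (a : Fin n → ℝ) :
    strongAccSpan f g k a =
      Submodule.map (pvfEvalLM a) ((strongAccModule f g k).restrictScalars ℝ) := by
  apply le_antisymm
  · rw [strongAccSpan, Submodule.span_le]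
    rintro - ⟨h, hh, rfl⟩
    exact ⟨h, Submodule.subset_span hh, rfl⟩
  · rintro - ⟨y, hy, rfl⟩
    have hy' : y ∈ strongAccModule f g k := hy
    clear hy
    induction hy' using Submodule.span_induction with
    | mem z hz => exact Submodule.subset_span ⟨z, hz, rfl⟩
    | zero => rw [map_zero]; exact Submodule.zero_mem _
    | add u v _ _ hu hv => rw [map_add]; exact Submodule.add_mem _ hu hv
    | smul p u _ hu =>
        rw [pvfEvalLM_poly_smul]
        exact Submodule.smul_mem _ _ hu

lemma strongAccSpanInf_eq_iSup (a : Fin n → ℝ) :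
    strongAccSpanInf f g a = ⨆ k, strongAccSpan f g k a := by
  rw [strongAccSpanInf, Set.image_iUnion, Submodule.span_iUnion]
  rfl

end AuxLemmas

/-- (i) There is `l̂` with `C_0^{#l̂} = C_0^{#l̂+1}`; (ii) whenever
`C_0^{#k} = C_0^{#k+1}`, one has `C_0^{#m'} = C_0^{#k}` for all `m' ≥ k` and `S_k^* = S_∞^*`. -/
theorem strong_acc_module_chain_stabilizes {n m : ℕ}
    (f : Fin n → MvPolynomial (Fin n) ℝ) (g : Fin m → Fin n → MvPolynomial (Fin n) ℝ) :
    (∃ r : ℕ, strongAccModule f g r = strongAccModule f g (r + 1)) ∧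
    ∀ k : ℕ, strongAccModule f g k = strongAccModule f g (k + 1) →
      (∀ m' ≥ k, strongAccModule f g m' = strongAccModule f g k) ∧
      strongSingularSetLt f g k n = strongSingularSetInfLt f g n := by
  constructor
  · obtain ⟨r, hr⟩ := (monotone_stabilizes_iff_noetherian.mpr inferInstance)
      (⟨strongAccModule f g, strongAccModule_mono f g⟩ : ℕ →o _)
    exact ⟨r, hr (r + 1) (Nat.le_succ r)⟩
  · intro k hk
    have key : ∀ j : ℕ, strongAccModule f g (k + j) = strongAccModule f g k := by
      intro j
      induction j with
      | zero => rfl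
      | succ j ih =>
          apply le_antisymm
          · rw [show k + (j + 1) = (k + j) + 1 from rfl, strongAccModule,
              Submodule.span_le]
            rintro h (hh | ⟨X, hX, h', hh', rfl⟩)
            · rw [← ih]; exact Submodule.subset_span hh
            · have : h' ∈ strongAccModule f g k := by
                rw [← ih]; exact Submodule.subset_span hh'
              have := bracket_mem_succ f g X hX k h' this
              rwa [← hk] at this
          · exact strongAccModule_mono f g (Nat.le_add_right k (j + 1))
    have hmods : ∀ m' ≥ k, strongAccModule f g m' = strongAccModule f g k := by
      intro m' hm'
      obtain ⟨j, rfl⟩ := Nat.exists_eq_add_of_le hm'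
      exact key j
    refine ⟨hmods, ?_⟩
    have hspan : ∀ a : Fin n → ℝ, strongAccSpanInf f g a = strongAccSpan f g k a := by
      intro a
      rw [strongAccSpanInf_eq_iSup]
      apply le_antisymm
      · apply iSup_le
        intro j
        rcases le_total j k with hjk | hkj
        · exact Submodule.span_mono (Set.image_mono (strongAccFam_mono f g hjk))
        · rw [strongAccSpan_eq_map, strongAccSpan_eq_map, hmods j hkj]
      · exact le_iSup (fun j => strongAccSpan f g j a) k
    ext a
    simp only [strongSingularSetLt, strongSingularSetInfLt, Set.mem_setOf_eq]
    rw [hspan a]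
end

section
/- Let X be a polynomial vector field on ℝ^n and let J ⊆ ℝ[x_1,…,x_n] be an ideal invariant under L_X. If x : [0,T] → ℝ^n is continuous, differentiable on [0,T] with x'(t) = X(x(t)) for all t ∈ [0,T], and x(0) ∈ 𝕍(J), then x(t) ∈ 𝕍(J) for all t ∈ [0,T]. -/
open MvPolynomial

open Set
open scoped Matrix

/-! By Hilbert's basis theorem `J = (g₁, …, gₖ)`, and invariance gives `L_X gᵢ = ∑ⱼ aᵢⱼ gⱼ`.
Along a solution the values `yᵢ(t) = gᵢ(x(t))` therefore satisfy the linear system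
`y' = A(x(t)) y` with continuous coefficients and `y(0) = 0`, so `y ≡ 0` by Grönwall's
inequality. -/

theorem MvPolynomial.hasDerivWithinAt_eval {𝕜 σ : Type*} [NontriviallyNormedField 𝕜] [Fintype σ]
    (p : MvPolynomial σ 𝕜) {x : 𝕜 → σ → 𝕜} {x' : σ → 𝕜} {s : Set 𝕜} {t : 𝕜}
    (hx : HasDerivWithinAt x x' s t) :
    HasDerivWithinAt (fun τ => eval (x τ) p) (∑ i, x' i * eval (x t) (pderiv i p)) s t := by
  classical
  induction p using MvPolynomial.induction_on with
  | C a => simpa using hasDerivWithinAt_const t s a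
  | add p q hp hq => simpa [mul_add, Finset.sum_add_distrib] using hp.fun_add hq
  | mul_X p j hp =>
    have hderiv : ∑ i, x' i * eval (x t) (pderiv i (p * X j))
        = (∑ i, x' i * eval (x t) (pderiv i p)) * x t j + eval (x t) p * x' j := by
      simp [Derivation.leibniz, pderiv_X, Pi.single_apply, apply_ite (eval (x t)), mul_add,
        Finset.sum_add_distrib, Finset.sum_mul, mul_assoc, mul_comm (x t j),
        mul_comm (eval (x t) p), add_comm]
    rw [hderiv]
    simpa using hp.fun_mul (hasDerivWithinAt_pi.1 hx j)

theorem hasDerivWithinAt_eval_pLieDeriv {n : ℕ}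
    {X : Fin n → MvPolynomial (Fin n) ℝ} (p : MvPolynomial (Fin n) ℝ) {x : ℝ → Fin n → ℝ}
    {s : Set ℝ} {t : ℝ} (hx : HasDerivWithinAt x (pvfEval X (x t)) s t) :
    HasDerivWithinAt (fun τ => eval (x τ) p) (eval (x t) (pLieDeriv X p)) s t := by
  simpa [pLieDeriv, pvfEval] using p.hasDerivWithinAt_eval hx

theorem eq_zero_of_hasDerivWithinAt_clm_apply_of_eq_zero_right {E : Type*}
    [NormedAddCommGroup E] [NormedSpace ℝ E] {L : ℝ → E →L[ℝ] E} {f : ℝ → E} {a b : ℝ}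
    (hL : ContinuousOn L (Icc a b)) (hf : ContinuousOn f (Icc a b))
    (hf' : ∀ t ∈ Ico a b, HasDerivWithinAt f (L t (f t)) (Ici t) t) (ha : f a = 0) :
    ∀ t ∈ Icc a b, f t = 0 := by
  obtain ⟨K, hK⟩ := isCompact_Icc.exists_bound_of_continuousOn hL
  refine eq_zero_of_abs_deriv_le_mul_abs_self_of_eq_zero_right (K := K) hf hf' ha fun t ht => ?_
  exact (L t).le_of_opNorm_le (hK t (Ico_subset_Icc_self ht)) _

theorem Matrix.eq_zero_of_hasDerivWithinAt_mulVec_of_eq_zero_right {ι : Type*} [Fintype ι]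
    {M : ℝ → Matrix ι ι ℝ} {f : ℝ → ι → ℝ} {a b : ℝ}
    (hM : ContinuousOn M (Icc a b)) (hf : ContinuousOn f (Icc a b))
    (hf' : ∀ t ∈ Ico a b, HasDerivWithinAt f (M t *ᵥ f t) (Ici t) t) (ha : f a = 0) :
    ∀ t ∈ Icc a b, f t = 0 := by
  classical
  let Φ : Matrix ι ι ℝ →ₗ[ℝ] (ι → ℝ) →L[ℝ] (ι → ℝ) :=
    LinearMap.toContinuousLinearMap.toLinearMap ∘ₗ Matrix.toLin'.toLinearMap
  exact eq_zero_of_hasDerivWithinAt_clm_apply_of_eq_zero_right (L := fun t => Φ (M t))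
    (Φ.continuous_of_finiteDimensional.comp_continuousOn hM) hf hf' ha

theorem mem_zeroSet_span_iff {n : ℕ} {S : Set (MvPolynomial (Fin n) ℝ)} {a : Fin n → ℝ} :
    a ∈ zeroSet (Ideal.span S) ↔ ∀ p ∈ S, eval a p = 0 := by
  change Ideal.span S ≤ RingHom.ker (eval a) ↔ _
  rw [Ideal.span_le]
  rfl

theorem invariant_ideal_variety_invariant_general {n : ℕ} (X : Fin n → MvPolynomial (Fin n) ℝ)
    (J : Ideal (MvPolynomial (Fin n) ℝ)) (hJ : IdealInvariant X J) (T : ℝ)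
    (x : ℝ → Fin n → ℝ)
    (hx : ∀ t ∈ Set.Icc (0:ℝ) T,
      HasDerivWithinAt x (pvfEval X (x t)) (Set.Icc (0:ℝ) T) t)
    (h0 : x 0 ∈ zeroSet J) :
    ∀ t ∈ Set.Icc (0:ℝ) T, x t ∈ zeroSet J := by
  obtain ⟨k, g, rfl⟩ := Submodule.fg_iff_exists_fin_generating_family.1 (IsNoetherian.noetherian J)
  choose A hA using fun i => Ideal.mem_span_range_iff_exists_fun.1
    (hJ _ (Ideal.subset_span (mem_range_self i)))
  let M : ℝ → Matrix (Fin k) (Fin k) ℝ := fun t i j => eval (x t) (A i j)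
  let y : ℝ → Fin k → ℝ := fun t i => eval (x t) (g i)
  have hxcont : ContinuousOn x (Icc 0 T) := fun t ht => (hx t ht).continuousWithinAt
  have hMcont : ContinuousOn M (Icc 0 T) := continuousOn_pi.2 fun i => continuousOn_pi.2 fun j =>
    (continuous_eval _).comp_continuousOn hxcont
  have hycont : ContinuousOn y (Icc 0 T) :=
    continuousOn_pi.2 fun i => (continuous_eval _).comp_continuousOn hxcont
  have hy' : ∀ t ∈ Ico 0 T, HasDerivWithinAt y (M t *ᵥ y t) (Ici t) t := fun t ht =>
    hasDerivWithinAt_pi.2 fun i => by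
      have := hasDerivWithinAt_eval_pLieDeriv (g i)
        ((hx t (Ico_subset_Icc_self ht)).mono_of_mem_nhdsWithin (Icc_mem_nhdsGE_of_mem ht))
      simpa [← hA i, M, y, Matrix.mulVec, dotProduct] using this
  have hy0 : y 0 = 0 := funext fun i => mem_zeroSet_span_iff.1 h0 _ (mem_range_self i)
  intro t ht
  rw [mem_zeroSet_span_iff, forall_mem_range]
  exact congrFun (Matrix.eq_zero_of_hasDerivWithinAt_mulVec_of_eq_zero_right
    hMcont hycont hy' hy0 t ht)

/-- If `J` is an ideal invariant under `L_X` and `x : [0,T] → ℝ^n` is a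
solution of `x' = X(x)` with `x(0) ∈ 𝕍(J)`, then `x(t) ∈ 𝕍(J)` for all `t ∈ [0,T]`. -/
theorem invariant_ideal_variety_invariant {n : ℕ} (X : Fin n → MvPolynomial (Fin n) ℝ)
    (J : Ideal (MvPolynomial (Fin n) ℝ)) (hJ : IdealInvariant X J) (T : ℝ)
    (x : ℝ → Fin n → ℝ) (hcont : ContinuousOn x (Set.Icc 0 T))
    (hx : ∀ t ∈ Set.Icc (0:ℝ) T,
      HasDerivWithinAt x (pvfEval X (x t)) (Set.Icc (0:ℝ) T) t)
    (h0 : x 0 ∈ zeroSet J) :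
    ∀ t ∈ Set.Icc (0:ℝ) T, x t ∈ zeroSet J :=
  invariant_ideal_variety_invariant_general X J hJ T x hx h0
end
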